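/- Assume s is special for S with parameter α, the induced subgraph G_S is ε-far from cycle-free (every set of edges of G_S whose removal makes G_S a forest has more than ε·|S|·d elements), and fewer than ε·|S|/2 vertices of S are blue. Then for a pair of independent μ-random walks, Pr(E) ≥ ε·|S|·α²/(64·(ℓ+1)), where E is the union of the events E_w over w ∈ S. -/

import Mathlib

open MeasureTheory SimpleGraph

namespace CF

variable {V : Type} [Fintype V] [DecidableEq V]

/-- The subgraph of `G` induced on the vertex set `S` (kept as a graph on `V`). -/
def inducedSub (G : SimpleGraph V) (S : Set V) : SimpleGraph V where
  Adj u v := u ∈ S ∧ v ∈ S ∧ G.Adj u v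
  symm := ⟨fun u v h => ⟨h.2.1, h.1, h.2.2.symm⟩⟩
  loopless := ⟨fun v h => G.loopless.irrefl v h.2.2⟩

/-- The space of walks in `G` starting at `s` of length at most `ℓ`
(a lazy walk of length `ℓ` induces such a walk after deleting self-loops). -/
def WalkSpace (G : SimpleGraph V) (s : V) (ℓ : ℕ) : Type :=
  Σ t : V, {w : G.Walk s t // w.length ≤ ℓ}

instance (G : SimpleGraph V) (s : V) (ℓ : ℕ) : MeasurableSpace (WalkSpace G s ℓ) := ⊤

variable {G : SimpleGraph V} {s : V} {ℓ : ℕ}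

/-- The walk `W` reaches the vertex `v`. -/
def Reaches (W : WalkSpace G s ℓ) (v : V) : Prop := v ∈ W.2.1.support

/-- The simple path from `s` to `v` induced by a walk `W` reaching `v`:
truncate `W` at its first visit to `v` and delete retraced segments. -/
def inducedPath (W : WalkSpace G s ℓ) (v : V) (h : Reaches W v) : G.Walk s v :=
  (W.2.1.takeUntil v h).bypass

/-- `s` is special for `S` with parameter `α`: every vertex of `S` is reached
by a `μ`-random walk with probability at least `α`. -/
def Special (μ : Measure (WalkSpace G s ℓ)) (S : Finset V) (α : ℝ) : Prop :=
  ∀ v ∈ S, α ≤ (μ {W | Reaches W v}).toReal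

/-- `P` is a dominant path to `v`: `P` is a simple path from `s` to `v`, more than half of
the probability mass of walks reaching `v` induce `P` at `v`, and the probability of
reaching `v` inducing a path different from `P` is less than `α/2`. -/
def IsDominantPath (μ : Measure (WalkSpace G s ℓ)) (α : ℝ) (v : V) (P : G.Walk s v) : Prop :=
  P.IsPath ∧
    (μ {W | Reaches W v}).toReal / 2 <
      (μ {W | ∃ h : Reaches W v, inducedPath W v h = P}).toReal ∧
    (μ {W | ∃ h : Reaches W v, inducedPath W v h ≠ P}).toReal < α / 2

/-- `v` is isolated: it has a dominant path. -/
def Isolated (μ : Measure (WalkSpace G s ℓ)) (α : ℝ) (v : V) : Prop :=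
  ∃ P : G.Walk s v, IsDominantPath μ α v P

/-- The directed edge `⟨u,v⟩` of `G_S` is dominant. -/
def Dominant (μ : Measure (WalkSpace G s ℓ)) (S : Finset V) (α : ℝ) (u v : V) : Prop :=
  u ∈ S ∧ v ∈ S ∧ G.Adj u v ∧ Isolated μ α v ∧
    (μ {W | ∃ h : Reaches W v, s(u, v) ∉ (inducedPath W v h).edges}).toReal < α / 2

/-- The undirected edge `(u,v)` of `G_S` is recessive. -/
def Recessive (μ : Measure (WalkSpace G s ℓ)) (S : Finset V) (α : ℝ) (u v : V) : Prop :=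
  u ∈ S ∧ v ∈ S ∧ G.Adj u v ∧ ¬ Dominant μ S α u v ∧ ¬ Dominant μ S α v u

/-- Two walks form a cycle if the subgraph of `G` induced on the union of their
vertex sets contains a cycle. -/
def FormsCycle (W W' : WalkSpace G s ℓ) : Prop :=
  ¬ (inducedSub G ({v | Reaches W v} ∪ {v | Reaches W' v})).IsAcyclic

/-- `cyc_W`: the probability that an independent `μ`-random walk forms a cycle with `W`. -/
noncomputable def cycProb (μ : Measure (WalkSpace G s ℓ)) (W : WalkSpace G s ℓ) : ℝ :=
  (μ {W' | FormsCycle W W'}).toReal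

/-- `W` is heavy if `cyc_W > 1/√n`. -/
def Heavy (μ : Measure (WalkSpace G s ℓ)) (W : WalkSpace G s ℓ) : Prop :=
  1 / Real.sqrt (Fintype.card V) < cycProb μ W

/-- `W` is light if it is not heavy. -/
def Light (μ : Measure (WalkSpace G s ℓ)) (W : WalkSpace G s ℓ) : Prop := ¬ Heavy μ W

/-- `q^H_v`: the probability that a `μ`-random walk is heavy and reaches `v`. -/
noncomputable def qH (μ : Measure (WalkSpace G s ℓ)) (v : V) : ℝ :=
  (μ {W | Heavy μ W ∧ Reaches W v}).toReal

/-- `v` is blue if `q^H_v > α/4`. -/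
def Blue (μ : Measure (WalkSpace G s ℓ)) (α : ℝ) (v : V) : Prop := α / 4 < qH μ v

/-- The event `E_w` on a pair of independent walks: both walks are light and either
(i) both reach `w` and induce distinct paths at `w`, or (ii) one reaches `w`, the other
reaches a `G_S`-neighbor `u` of `w`, and the edge sets of the two induced paths together
with the edge `(u,w)` contain a cycle. -/
def EventE (μ : Measure (WalkSpace G s ℓ)) (S : Finset V) (w : V)
    (p : WalkSpace G s ℓ × WalkSpace G s ℓ) : Prop :=
  Light μ p.1 ∧ Light μ p.2 ∧
    ((∃ (h1 : Reaches p.1 w) (h2 : Reaches p.2 w),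
        inducedPath p.1 w h1 ≠ inducedPath p.2 w h2) ∨
      (∃ u, u ∈ S ∧ w ∈ S ∧ G.Adj u w ∧
        ((∃ (h1 : Reaches p.1 w) (h2 : Reaches p.2 u),
            ¬ (SimpleGraph.fromEdgeSet
                ({e | e ∈ (inducedPath p.1 w h1).edges} ∪
                  {e | e ∈ (inducedPath p.2 u h2).edges} ∪ {s(u, w)})).IsAcyclic) ∨
          (∃ (h1 : Reaches p.2 w) (h2 : Reaches p.1 u),
            ¬ (SimpleGraph.fromEdgeSet
                ({e | e ∈ (inducedPath p.2 w h1).edges} ∪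
                  {e | e ∈ (inducedPath p.1 u h2).edges} ∪ {s(u, w)})).IsAcyclic))))

end CF

/-! Call `w ∈ S` good if it is not blue and `Pr(E_w) < (α/4)²`. A good vertex is isolated, and
every edge between good vertices is dominant in at least one direction: otherwise pairing light
walks from two sets of mass `α/4` each produces `E_w` with probability `(α/4)²`. A dominant edge
`⟨u,v⟩` is the last edge of the dominant path of `v`, and this path extends the dominant path of
`u`, so the edges between good vertices form a forest, graded by the length of dominant paths.
As `G_S` is far from cycle-free, more than `ε|S|` vertices are not good, so at least `ε|S|/2` of
them have `Pr(E_w) ≥ (α/4)²`. A pair of walks visits at most `2(ℓ+1)` vertices, hence lies in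
at most `2(ℓ+1)` of the events `E_w`. -/

open scoped ENNReal

namespace Finset

variable {ι : Type*}

theorem exists_subset_le_sum_lt_two_mul {F : Finset ι} {m : ι → ℝ} {c : ℝ} (hc : 0 < c)
    (hm : ∀ i ∈ F, 0 ≤ m i) (hlt : ∀ i ∈ F, m i < c) (hF : c ≤ ∑ i ∈ F, m i) :
    ∃ J ⊆ F, c ≤ ∑ i ∈ J, m i ∧ ∑ i ∈ J, m i < 2 * c := by
  classical
  induction F using Finset.induction_on with
  | empty => rw [sum_empty] at hF; linarith
  | insert a F ha ih =>
    rw [sum_insert ha] at hF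
    by_cases hc' : c ≤ ∑ i ∈ F, m i
    · obtain ⟨J, hJ, hJc⟩ := ih (fun i hi => hm i (mem_insert_of_mem hi))
        (fun i hi => hlt i (mem_insert_of_mem hi)) hc'
      exact ⟨J, hJ.trans (subset_insert a F), hJc⟩
    · refine ⟨insert a F, subset_rfl, ?_, ?_⟩ <;> rw [sum_insert ha]
      · exact hF
      · linarith [hlt a (mem_insert_self a F)]

theorem exists_subset_le_sum_le_sum_sdiff [DecidableEq ι] {F : Finset ι} {m : ι → ℝ} {c : ℝ}
    (hc : 0 < c) (hm : ∀ i ∈ F, 0 ≤ m i) (hF : 3 * c ≤ ∑ i ∈ F, m i)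
    (hmax : ∀ i ∈ F, m i ≤ ∑ j ∈ F, m j - c) :
    ∃ J ⊆ F, c ≤ ∑ i ∈ J, m i ∧ c ≤ ∑ i ∈ F \ J, m i := by
  by_cases hbig : ∃ i ∈ F, c ≤ m i
  · obtain ⟨i, hi, hci⟩ := hbig
    refine ⟨{i}, singleton_subset_iff.mpr hi, by simpa using hci, ?_⟩
    rw [sum_sdiff_eq_sub (singleton_subset_iff.mpr hi), sum_singleton]
    linarith [hmax i hi]
  · push Not at hbig
    obtain ⟨J, hJ, hcJ, hJ2⟩ := exists_subset_le_sum_lt_two_mul hc hm hbig (by linarith)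
    exact ⟨J, hJ, hcJ, by rw [sum_sdiff_eq_sub hJ]; linarith⟩

end Finset

namespace MeasureTheory

variable {Ω ι : Type*} [MeasurableSpace Ω] (μ : Measure Ω)

open Classical in
theorem sum_measure_le_mul_measure_biUnion {T : Finset ι} {E : ι → Set Ω}
    (hE : ∀ i ∈ T, MeasurableSet (E i)) {k : ℕ} (hk : ∀ ω, (T.filter fun i => ω ∈ E i).card ≤ k) :
    ∑ i ∈ T, μ (E i) ≤ k * μ (⋃ i ∈ T, E i) := by
  have hpt : ∀ ω, ∑ i ∈ T, (E i).indicator 1 ω ≤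
      k * (⋃ i ∈ T, E i).indicator (1 : Ω → ℝ≥0∞) ω := by
    intro ω
    have hcard : ∑ i ∈ T, (E i).indicator (1 : Ω → ℝ≥0∞) ω = (T.filter fun i => ω ∈ E i).card := by
      simp only [Set.indicator_apply, Pi.one_apply, Finset.sum_boole]
    by_cases hω : ω ∈ ⋃ i ∈ T, E i
    · rw [Set.indicator_of_mem hω, Pi.one_apply, mul_one, hcard]
      exact_mod_cast hk ω
    · rw [Set.indicator_of_notMem hω, mul_zero, nonpos_iff_eq_zero]
      refine Finset.sum_eq_zero fun i hi => Set.indicator_of_notMem (fun hωi => hω ?_) _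
      exact Set.mem_biUnion hi hωi
  calc ∑ i ∈ T, μ (E i) = ∫⁻ ω, ∑ i ∈ T, (E i).indicator 1 ω ∂μ := by
        rw [lintegral_finsetSum _ fun i hi => measurable_one.indicator (hE i hi)]
        exact Finset.sum_congr rfl fun i hi => (lintegral_indicator_one (hE i hi)).symm
    _ ≤ ∫⁻ ω, k * (⋃ i ∈ T, E i).indicator 1 ω ∂μ := lintegral_mono hpt
    _ = k * μ (⋃ i ∈ T, E i) := by
        have hU : MeasurableSet (⋃ i ∈ T, E i) := Finset.measurableSet_biUnion T hE
        rw [lintegral_const_mul _ (measurable_one.indicator hU), lintegral_indicator_one hU]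

theorem sq_le_measureReal_prod_of_prod_subset [IsFiniteMeasure μ] {A B : Set Ω}
    {E : Set (Ω × Ω)} {c : ℝ} (hc : 0 ≤ c) (hA : c ≤ μ.real A) (hB : c ≤ μ.real B)
    (h : A ×ˢ B ⊆ E) : c ^ 2 ≤ (μ.prod μ).real E :=
  calc c ^ 2 ≤ μ.real A * μ.real B := by rw [sq]; exact mul_le_mul hA hB hc (hc.trans hA)
    _ = (μ.prod μ).real (A ×ˢ B) := (measureReal_prod_prod A B).symm
    _ ≤ (μ.prod μ).real E := measureReal_mono h

end MeasureTheory

namespace SimpleGraph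

variable {V : Type*} {G H : SimpleGraph V}

theorem not_isAcyclic_fromEdgeSet_of_isPath_ne {E : Set (Sym2 V)} {a b : V} {p q : G.Walk a b}
    (hp : p.IsPath) (hq : q.IsPath) (hpq : p ≠ q) (hpE : ∀ e ∈ p.edges, e ∈ E)
    (hqE : ∀ e ∈ q.edges, e ∈ E) : ¬ (fromEdgeSet E).IsAcyclic := by
  have hsub : ∀ r : G.Walk a b, (∀ e ∈ r.edges, e ∈ E) →
      ∀ e ∈ r.edges, e ∈ (fromEdgeSet E).edgeSet := fun r hr e he => by
    rw [edgeSet_fromEdgeSet]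
    exact ⟨hr e he, G.not_isDiag_of_mem_edgeSet (r.edges_subset_edgeSet he)⟩
  intro hac
  have := (hac.subsingleton_path a b).elim ⟨_, hp.transfer (hsub p hpE)⟩
    ⟨_, hq.transfer (hsub q hqE)⟩
  exact hpq (Walk.ext_support (by simpa using congrArg (·.1.support) this))

theorem isAcyclic_of_forall_adj_parent (par : V → V) (f : V → ℕ)
    (h : ∀ ⦃x y⦄, H.Adj x y → x = par y ∧ f y = f x + 1 ∨ y = par x ∧ f x = f y + 1) :
    H.IsAcyclic := by
  classical
  intro v c hc
  obtain ⟨m, hm, hmax⟩ := c.support.toFinset.exists_max_image f ⟨v, by simp⟩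
  have hm : m ∈ c.support := List.mem_toFinset.mp hm
  -- on the cycle rotated to start at the highest vertex `m`, both neighbours of `m` are its parent
  set c' := c.rotate m hm
  have hc' : c'.IsCycle := hc.rotate hm
  have hle : ∀ i, f (c'.getVert i) ≤ f m := fun i =>
    hmax _ (List.mem_toFinset.mpr ((c.mem_support_rotate_iff m hm).mp (c'.getVert_mem_support i)))
  have hsnd : c'.snd = par m := by
    rcases h (c'.adj_snd hc'.not_nil) with h1 | h1
    · have h2 : f (c'.getVert 1) = f m + 1 := h1.2
      have := hle 1; omega
    · exact h1.1
  have hpen : c'.penultimate = par m := by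
    rcases h (c'.adj_penultimate hc'.not_nil) with h1 | h1
    · exact h1.1
    · have h2 : f (c'.getVert (c'.length - 1)) = f m + 1 := h1.2
      have := hle (c'.length - 1); omega
  exact hc'.snd_ne_penultimate (hsnd.trans hpen.symm)

end SimpleGraph

namespace CF

variable {V : Type} {G : SimpleGraph V} {s : V} {ℓ : ℕ}

open Classical in
theorem card_filter_reaches_le (W : WalkSpace G s ℓ) (T : Finset V) :
    (T.filter (Reaches W)).card ≤ ℓ + 1 := by
  classical
  calc (T.filter (Reaches W)).card ≤ W.2.1.support.toFinset.card :=
        Finset.card_le_card fun _ hw => List.mem_toFinset.mpr (Finset.mem_filter.mp hw).2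
    _ ≤ W.2.1.support.length := List.toFinset_card_le _
    _ = W.2.1.length + 1 := Walk.length_support _
    _ ≤ ℓ + 1 := Nat.succ_le_succ W.2.2

theorem reaches_of_eventE [Fintype V] [DecidableEq V] {μ : Measure (WalkSpace G s ℓ)}
    {S : Finset V} {w : V} {p : WalkSpace G s ℓ × WalkSpace G s ℓ} (h : EventE μ S w p) :
    Reaches p.1 w ∨ Reaches p.2 w := by
  obtain ⟨-, -, ⟨h1, -⟩ | ⟨-, -, -, -, ⟨h1, -⟩ | ⟨h2, -⟩⟩⟩ := h
  exacts [.inl h1, .inl h1, .inr h2]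

open Classical in
noncomputable def dominantParent [DecidableEq V] (μ : Measure (WalkSpace G s ℓ)) (α : ℝ) (v : V) :
    V :=
  if h : Isolated μ α v then h.choose.penultimate else v

open Classical in
noncomputable def dominantDepth [DecidableEq V] (μ : Measure (WalkSpace G s ℓ)) (α : ℝ) (v : V) :
    ℕ :=
  if h : Isolated μ α v then h.choose.length else 0

variable (μ : Measure (WalkSpace G s ℓ)) {S : Finset V} {α : ℝ} {u v w : V}

section

variable [DecidableEq V]

theorem IsDominantPath.half_lt {P : G.Walk s v} (hP : IsDominantPath μ α v P)
    (hq : α ≤ μ.real {W | Reaches W v}) :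
    α / 2 < μ.real {W | ∃ h : Reaches W v, inducedPath W v h = P} := by
  have : μ.real {W | Reaches W v} / 2 < μ.real {W | ∃ h, inducedPath W v h = P} := hP.2.1
  linarith

variable [IsProbabilityMeasure μ]

theorem measureReal_inducedPath_eq_add_ne_le (P : G.Walk s v) :
    μ.real {W | ∃ h : Reaches W v, inducedPath W v h = P} +
      μ.real {W | ∃ h : Reaches W v, inducedPath W v h ≠ P} ≤ μ.real {W | Reaches W v} := by
  have hdisj : Disjoint {W : WalkSpace G s ℓ | ∃ h : Reaches W v, inducedPath W v h = P}
      {W | ∃ h : Reaches W v, inducedPath W v h ≠ P} :=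
    Set.disjoint_left.mpr fun _ hP hP' => hP'.2 hP.2
  rw [← measureReal_union hdisj .of_discrete]
  exact measureReal_mono (by rintro W (⟨h, -⟩ | ⟨h, -⟩) <;> exact h)

theorem isDominantPath_of_lt {P : G.Walk s v} (hP : P.IsPath)
    (hq : α ≤ μ.real {W | Reaches W v})
    (h : μ.real {W | Reaches W v} - α / 2 <
      μ.real {W | ∃ h : Reaches W v, inducedPath W v h = P}) :
    IsDominantPath μ α v P :=
  ⟨hP, show μ.real _ / 2 < μ.real _ by linarith,
    show μ.real _ < α / 2 by linarith [measureReal_inducedPath_eq_add_ne_le μ P]⟩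

theorem IsDominantPath.mem_edges {P : G.Walk s v} (hP : IsDominantPath μ α v P)
    (hq : α ≤ μ.real {W | Reaches W v})
    (hu : μ.real {W | ∃ h : Reaches W v, s(u, v) ∉ (inducedPath W v h).edges} < α / 2) :
    s(u, v) ∈ P.edges := by
  by_contra hmem
  have : μ.real {W | ∃ h : Reaches W v, inducedPath W v h = P} ≤
      μ.real {W | ∃ h : Reaches W v, s(u, v) ∉ (inducedPath W v h).edges} :=
    measureReal_mono fun W ⟨h, hW⟩ => ⟨h, hW ▸ hmem⟩
  linarith [hP.half_lt μ hq]

theorem Dominant.eq_penultimate (hdom : Dominant μ S α u v) {P : G.Walk s v}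
    (hP : IsDominantPath μ α v P) (hq : α ≤ μ.real {W | Reaches W v}) : u = P.penultimate :=
  hP.1.eq_penultimate_of_mem_edges (Sym2.eq_swap ▸ hP.mem_edges μ hq hdom.2.2.2.2)

end

variable [IsProbabilityMeasure μ] [Fintype V]

instance : Finite (WalkSpace G s ℓ) := by
  classical
  have (t : V) : Finite {w : G.Walk s t // w.length ≤ ℓ} :=
    .of_equiv {w : G.Walk s t // w.length < ℓ + 1}
      (Equiv.subtypeEquivRight fun _ => Nat.lt_succ_iff)
  unfold WalkSpace
  infer_instance

theorem measureReal_inter_light_ge (hw : ¬ Blue μ α w) {X : Set (WalkSpace G s ℓ)}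
    (hX : X ⊆ {W | Reaches W w}) : μ.real X - α / 4 ≤ μ.real (X ∩ {W | Light μ W}) := by
  have hsub : X ⊆ (X ∩ {W | Light μ W}) ∪ {W | Heavy μ W ∧ Reaches W w} := fun W hW =>
    (em (Light μ W)).imp (⟨hW, ·⟩) fun hL => ⟨not_not.mp hL, hX hW⟩
  have hH : μ.real {W | Heavy μ W ∧ Reaches W w} ≤ α / 4 := not_lt.mp hw
  linarith [(measureReal_mono (μ := μ) hsub).trans (measureReal_union_le _ _)]

variable [DecidableEq V]

theorem sq_le_eventE_of_forall_light (hα : 0 ≤ α) (hw : ¬ Blue μ α w) (hu : ¬ Blue μ α u)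
    {X Y : Set (WalkSpace G s ℓ)} (hX : X ⊆ {W | Reaches W w}) (hY : Y ⊆ {W | Reaches W u})
    (hXα : α / 2 ≤ μ.real X) (hYα : α / 2 ≤ μ.real Y)
    (hE : ∀ W₁ ∈ X, ∀ W₂ ∈ Y, Light μ W₁ → Light μ W₂ → EventE μ S v (W₁, W₂)) :
    (α / 4) ^ 2 ≤ (μ.prod μ).real {p | EventE μ S v p} := by
  refine sq_le_measureReal_prod_of_prod_subset μ (A := X ∩ {W | Light μ W})
    (B := Y ∩ {W | Light μ W}) (by positivity)
    (by linarith [measureReal_inter_light_ge μ hw hX])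
    (by linarith [measureReal_inter_light_ge μ hu hY]) ?_
  rintro ⟨W₁, W₂⟩ ⟨⟨h₁, hl₁⟩, h₂, hl₂⟩
  exact hE W₁ h₁ W₂ h₂ hl₁ hl₂

/-- Either the light walks reaching `w` mostly follow one path, which is then dominant, or
they split into two families of mass `α/4` each inducing different paths at `w`. -/
theorem isolated_or_sq_le_eventE (hα : 0 < α) (hq : α ≤ μ.real {W | Reaches W w})
    (hw : ¬ Blue μ α w) :
    Isolated μ α w ∨ (α / 4) ^ 2 ≤ (μ.prod μ).real {p | EventE μ S w p} := by
  classical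
  have := Fintype.ofFinite (WalkSpace G s ℓ)
  let A : G.Walk s w → Set (WalkSpace G s ℓ) := fun P =>
    {W | Light μ W ∧ ∃ h : Reaches W w, inducedPath W w h = P}
  let paths : Finset (G.Walk s w) :=
    Finset.univ.image fun W : {W : WalkSpace G s ℓ // Reaches W w} => inducedPath W.1 w W.2
  have hmem : ∀ W h, inducedPath W w h ∈ paths := fun W h => Finset.mem_image_of_mem _
    (Finset.mem_univ (⟨W, h⟩ : {W : WalkSpace G s ℓ // Reaches W w}))
  have hunion : ∀ J : Finset (G.Walk s w),
      μ.real {W | Light μ W ∧ ∃ h : Reaches W w, inducedPath W w h ∈ J} =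
        ∑ P ∈ J, μ.real (A P) := by
    intro J
    have hdisj : (J : Set (G.Walk s w)).PairwiseDisjoint A := fun P _ P' _ hne =>
      Set.disjoint_left.mpr fun _ hP hP' => hne (hP.2.2 ▸ hP'.2.2)
    rw [← measureReal_biUnion_finset (μ := μ) hdisj fun _ _ => .of_discrete]
    congr 1
    ext W
    simp only [A, Set.mem_iUnion, exists_prop]
    exact ⟨fun ⟨hl, h, hJ⟩ => ⟨_, hJ, hl, h, rfl⟩, fun ⟨_, hJ, hl, h, hP⟩ => ⟨hl, h, hP ▸ hJ⟩⟩
  have hL : μ.real {W | Reaches W w} - α / 4 ≤ ∑ P ∈ paths, μ.real (A P) := by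
    rw [← hunion]
    convert measureReal_inter_light_ge μ hw subset_rfl using 2
    ext W
    exact ⟨fun ⟨hl, h, _⟩ => ⟨h, hl⟩, fun ⟨h, hl⟩ => ⟨hl, h, hmem W h⟩⟩
  by_cases hbig : ∃ P ∈ paths, ∑ P' ∈ paths, μ.real (A P') - α / 4 < μ.real (A P)
  · obtain ⟨P, hP, hlt⟩ := hbig
    have hpath : P.IsPath := by
      obtain ⟨_, -, rfl⟩ := Finset.mem_image.mp hP
      exact Walk.bypass_isPath _
    have hAP : μ.real (A P) ≤ μ.real {W | ∃ h : Reaches W w, inducedPath W w h = P} :=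
      measureReal_mono fun _ hW => hW.2
    exact .inl ⟨P, isDominantPath_of_lt μ hpath hq (by linarith)⟩
  · push Not at hbig
    obtain ⟨J, -, hJ, hJc⟩ := Finset.exists_subset_le_sum_le_sum_sdiff (by positivity)
      (fun _ _ => measureReal_nonneg) (by linarith) hbig
    rw [← hunion] at hJ hJc
    refine .inr (sq_le_measureReal_prod_of_prod_subset μ (by positivity) hJ hJc ?_)
    rintro ⟨W₁, W₂⟩ ⟨⟨hl₁, h₁, hJ₁⟩, hl₂, h₂, hJ₂⟩
    exact ⟨hl₁, hl₂, .inl ⟨h₁, h₂, fun heq => (Finset.mem_sdiff.mp hJ₂).2 (heq ▸ hJ₁)⟩⟩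

theorem sq_le_eventE_of_not_dominant (hα : 0 ≤ α) (hu : u ∈ S) (hw : w ∈ S)
    (hadj : G.Adj u w) (hIu : Isolated μ α u) (hIw : Isolated μ α w) (hbu : ¬ Blue μ α u)
    (hbw : ¬ Blue μ α w) (huw : ¬ Dominant μ S α u w) (hwu : ¬ Dominant μ S α w u) :
    (α / 4) ^ 2 ≤ (μ.prod μ).real {p | EventE μ S w p} := by
  have hmass : ∀ {x y}, x ∈ S → y ∈ S → G.Adj x y → Isolated μ α y →
      ¬ Dominant μ S α x y →
        α / 2 ≤ μ.real {W | ∃ h : Reaches W y, s(x, y) ∉ (inducedPath W y h).edges} :=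
    fun hx hy hxy hI hnd => not_lt.mp fun hlt => hnd ⟨hx, hy, hxy, hI, hlt⟩
  refine sq_le_eventE_of_forall_light μ hα hbw hbu
    (X := {W | ∃ h : Reaches W w, s(u, w) ∉ (inducedPath W w h).edges})
    (Y := {W | ∃ h : Reaches W u, s(w, u) ∉ (inducedPath W u h).edges})
    (fun _ hW => hW.1) (fun _ hW => hW.1) (hmass hu hw hadj hIw huw)
    (hmass hw hu hadj.symm hIu hwu) ?_
  rintro W₁ ⟨h₁, hn₁⟩ W₂ ⟨h₂, hn₂⟩ hl₁ hl₂
  refine ⟨hl₁, hl₂, .inr ⟨u, hu, hw, hadj, .inl ⟨h₁, h₂, ?_⟩⟩⟩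
  -- the edge `uw` and the path through `s` avoiding it are two different `u`-`w` paths
  let P := ((inducedPath W₂ u h₂).reverse.append (inducedPath W₁ w h₁)).bypass
  have hsub : ∀ e ∈ P.edges, e ∈ (inducedPath W₁ w h₁).edges ∨ e ∈ (inducedPath W₂ u h₂).edges :=
    fun e he => by simpa [or_comm] using Walk.edges_bypass_subset_edges _ he
  refine not_isAcyclic_fromEdgeSet_of_isPath_ne (q := P) hadj.isPath_toWalk
    (Walk.bypass_isPath _) (fun heq => ?_) (by simp [hadj.edges_toWalk])
    fun e he => .inl (hsub e he)
  rcases hsub _ (heq ▸ hadj.edges_toWalk ▸ List.mem_singleton_self _) with h | h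
  exacts [hn₁ h, hn₂ (Sym2.eq_swap ▸ h)]

/-- If `Pv` does not extend `Pu`, then `Pv` without its last edge `uv` and `Pu` are two different
paths from `s` to `u`, which gives `E_v`. -/
theorem length_eq_or_sq_le_eventE (hα : 0 ≤ α) (hdom : Dominant μ S α u v)
    (hqu : α ≤ μ.real {W | Reaches W u}) (hqv : α ≤ μ.real {W | Reaches W v})
    (hbu : ¬ Blue μ α u) (hbv : ¬ Blue μ α v) {Pu : G.Walk s u} {Pv : G.Walk s v}
    (hPu : IsDominantPath μ α u Pu) (hPv : IsDominantPath μ α v Pv) :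
    Pv.length = Pu.length + 1 ∨ (α / 4) ^ 2 ≤ (μ.prod μ).real {p | EventE μ S v p} := by
  have hnil : ¬ Pv.Nil := fun h => by
    simpa [Walk.edges_eq_nil.mpr h] using hPv.mem_edges μ hqv hdom.2.2.2.2
  obtain rfl := hdom.eq_penultimate μ hPv hqv
  obtain ⟨hu, hv, hadj, -, -⟩ := hdom
  by_cases hQ : Pv.dropLast = Pu
  · exact .inl (by rw [← Walk.length_dropLast_add_one hnil, hQ])
  refine .inr (sq_le_eventE_of_forall_light μ hα hbv hbu (X := {W | ∃ h, inducedPath W v h = Pv})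
    (Y := {W | ∃ h, inducedPath W _ h = Pu}) (fun _ ⟨h, _⟩ => h) (fun _ ⟨h, _⟩ => h)
    (hPv.half_lt μ hqv).le (hPu.half_lt μ hqu).le ?_)
  rintro W₁ ⟨h₁, rfl⟩ W₂ ⟨h₂, rfl⟩ hl₁ hl₂
  refine ⟨hl₁, hl₂, .inr ⟨_, hu, hv, hadj, .inl ⟨h₁, h₂, ?_⟩⟩⟩
  refine not_isAcyclic_fromEdgeSet_of_isPath_ne hPv.1.dropLast hPu.1 hQ (fun e he => ?_)
    fun e he => .inl (.inr he)
  rw [Walk.edges_dropLast] at he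
  exact .inl (.inl (List.dropLast_subset _ he))

theorem Dominant.parent_or_sq_le_eventE (hα : 0 ≤ α) (hdom : Dominant μ S α u v)
    (hIu : Isolated μ α u) (hqu : α ≤ μ.real {W | Reaches W u})
    (hqv : α ≤ μ.real {W | Reaches W v}) (hbu : ¬ Blue μ α u) (hbv : ¬ Blue μ α v) :
    (u = dominantParent μ α v ∧ dominantDepth μ α v = dominantDepth μ α u + 1) ∨
      (α / 4) ^ 2 ≤ (μ.prod μ).real {p | EventE μ S v p} := by
  have hIv := hdom.2.2.2.1
  simp only [dominantParent, dominantDepth, dif_pos hIu, dif_pos hIv]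
  exact (length_eq_or_sq_le_eventE μ hα hdom hqu hqv hbu hbv hIu.choose_spec
    hIv.choose_spec).imp_left (⟨hdom.eq_penultimate μ hIv.choose_spec hqv, ·⟩)

theorem isAcyclic_inducedSub (hα : 0 < α) (hspec : Special μ S α) {U : Set V}
    (hUS : U ⊆ S)
    (hU : ∀ x ∈ U, ¬ Blue μ α x ∧ (μ.prod μ).real {p | EventE μ S x p} < (α / 4) ^ 2) :
    (inducedSub G U).IsAcyclic := by
  have hiso : ∀ x ∈ U, Isolated μ α x := fun x hx =>
    ((isolated_or_sq_le_eventE μ hα (hspec x (hUS hx)) (hU x hx).1).resolve_right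
      (hU x hx).2.not_ge)
  refine isAcyclic_of_forall_adj_parent (dominantParent μ α) (dominantDepth μ α) ?_
  rintro x y ⟨hx, hy, hxy⟩
  have hparent : ∀ {a b}, a ∈ U → b ∈ U → Dominant μ S α a b →
      a = dominantParent μ α b ∧ dominantDepth μ α b = dominantDepth μ α a + 1 :=
    fun ha hb hab => (hab.parent_or_sq_le_eventE μ hα.le (hiso _ ha) (hspec _ (hUS ha))
      (hspec _ (hUS hb)) (hU _ ha).1 (hU _ hb).1).resolve_right (hU _ hb).2.not_ge
  by_cases hxy' : Dominant μ S α x y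
  · exact .inl (hparent hx hy hxy')
  by_cases hyx' : Dominant μ S α y x
  · exact .inr (hparent hy hx hyx')
  exact absurd (sq_le_eventE_of_not_dominant μ hα.le (hUS hx) (hUS hy) hxy (hiso x hx)
    (hiso y hy) (hU x hx).1 (hU y hy).1 hxy' hyx') (hU y hy).2.not_ge

open Classical in
theorem sum_eventE_le (T : Finset V) :
    ∑ w ∈ T, (μ.prod μ).real {p | EventE μ S w p} ≤
      2 * (ℓ + 1) * (μ.prod μ).real {p | ∃ w ∈ T, EventE μ S w p} := by
  have hk : ∀ p : WalkSpace G s ℓ × WalkSpace G s ℓ,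
      (T.filter fun w => EventE μ S w p).card ≤ 2 * (ℓ + 1) := fun p =>
    calc (T.filter fun w => EventE μ S w p).card
        ≤ (T.filter (Reaches p.1) ∪ T.filter (Reaches p.2)).card :=
          Finset.card_le_card fun w hw => by
            obtain ⟨hwT, hE⟩ := Finset.mem_filter.mp hw
            rcases reaches_of_eventE hE with h | h <;> simp [hwT, h]
      _ ≤ (ℓ + 1) + (ℓ + 1) := (Finset.card_union_le _ _).trans
          (add_le_add (card_filter_reaches_le _ _) (card_filter_reaches_le _ _))
      _ = 2 * (ℓ + 1) := by omega
  have := sum_measure_le_mul_measure_biUnion (μ.prod μ) (E := fun w => {p | EventE μ S w p})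
    (fun _ _ => .of_discrete) hk
  have hU : (⋃ w ∈ T, {p | EventE μ S w p}) = {p | ∃ w ∈ T, EventE μ S w p} := by
    ext p; simp
  rw [hU] at this
  simp only [measureReal_def, ← ENNReal.toReal_sum fun _ _ => measure_ne_top _ _]
  have := ENNReal.toReal_mono (by finiteness) this
  simpa [ENNReal.toReal_mul, ENNReal.toReal_add] using this

/-- `G[S \ D]` is `G_S` with at most `|D| d` edges deleted. -/
theorem not_isAcyclic_inducedSub_sdiff [DecidableRel G.Adj] {d : ℕ} {ε : ℝ}
    (hdeg : ∀ v, G.degree v ≤ d)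
    (hfar : ∀ F : Finset (Sym2 V), ↑F ⊆ (inducedSub G ↑S).edgeSet →
      ((inducedSub G ↑S).deleteEdges ↑F).IsAcyclic → ε * S.card * d < (F.card : ℝ))
    {D : Finset V} (hD : (D.card : ℝ) ≤ ε * S.card) : ¬ (inducedSub G (↑S \ ↑D)).IsAcyclic := by
  classical
  intro hac
  let F := (D.biUnion fun v => G.incidenceFinset v).filter (· ∈ (inducedSub G ↑S).edgeSet)
  have hF : F.card ≤ D.card * d := (Finset.card_filter_le _ _).trans
    (Finset.card_biUnion_le_card_mul _ _ _ fun v _ =>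
      (G.card_incidenceFinset_eq_degree v).le.trans (hdeg v))
  have hle : (inducedSub G ↑S).deleteEdges ↑F ≤ inducedSub G (↑S \ ↑D) := by
    intro x y hxy
    rw [deleteEdges_adj] at hxy
    obtain ⟨⟨hx, hy, hGxy⟩, hnF⟩ := hxy
    have hmem : ∀ z ∈ D, z = x ∨ z = y → s(x, y) ∈ F := fun z hz hzxy =>
      Finset.mem_filter.mpr ⟨Finset.mem_biUnion.mpr ⟨z, hz, (G.mem_incidenceFinset z _).mpr
        (G.mk'_mem_incidenceSet_iff.mpr ⟨hGxy, hzxy⟩)⟩, hx, hy, hGxy⟩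
    exact ⟨⟨hx, fun hxD => hnF (hmem x hxD (.inl rfl))⟩,
      ⟨hy, fun hyD => hnF (hmem y hyD (.inr rfl))⟩, hGxy⟩
  have hlt := hfar F (fun e he => (Finset.mem_filter.mp he).2) (hac.anti hle)
  have : (F.card : ℝ) ≤ ε * S.card * d := calc
    (F.card : ℝ) ≤ D.card * d := by exact_mod_cast hF
    _ ≤ ε * S.card * d := mul_le_mul_of_nonneg_right hD d.cast_nonneg
  linarith

open Classical in
theorem card_filter_sq_le_eventE_ge [DecidableRel G.Adj] (hα : 0 < α) (hspec : Special μ S α)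
    {d : ℕ} {ε : ℝ} (hdeg : ∀ v, G.degree v ≤ d)
    (hfar : ∀ F : Finset (Sym2 V), ↑F ⊆ (inducedSub G ↑S).edgeSet →
      ((inducedSub G ↑S).deleteEdges ↑F).IsAcyclic → ε * S.card * d < (F.card : ℝ))
    (hblue : ((S.filter (Blue μ α)).card : ℝ) < ε * S.card / 2) :
    ε * S.card / 2 ≤
      (S.filter fun w => (α / 4) ^ 2 ≤ (μ.prod μ).real {p | EventE μ S w p}).card := by
  set B := S.filter (Blue μ α)
  set T := S.filter fun w => (α / 4) ^ 2 ≤ (μ.prod μ).real {p | EventE μ S w p}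
  by_contra! hT
  have hD : ((B ∪ T).card : ℝ) ≤ ε * S.card := by
    have : ((B ∪ T).card : ℝ) ≤ B.card + T.card := by exact_mod_cast Finset.card_union_le B T
    linarith
  refine not_isAcyclic_inducedSub_sdiff hdeg hfar hD
    (isAcyclic_inducedSub μ hα hspec Set.sdiff_subset fun x ⟨hxS, hxD⟩ => ?_)
  simp only [B, T, Finset.coe_union, Finset.coe_filter, Set.mem_union, Set.mem_ofPred_eq, not_or,
    not_and, not_le] at hxD
  exact ⟨hxD.1 hxS, hxD.2 hxS⟩

end CF

theorem stmt8_general {V : Type} [Fintype V] [DecidableEq V]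
    (G : SimpleGraph V) [DecidableRel G.Adj] (d : ℕ)
    (hdeg : ∀ v, G.degree v ≤ d)
    (ε : ℝ)
    (S : Finset V) (s : V) (ℓ : ℕ)
    (μ : MeasureTheory.Measure (CF.WalkSpace G s ℓ)) [MeasureTheory.IsProbabilityMeasure μ]
    (α : ℝ) (hα : 0 < α) (hspec : CF.Special μ S α)
    (hfar : ∀ F : Finset (Sym2 V), ↑F ⊆ (CF.inducedSub G ↑S).edgeSet →
      ((CF.inducedSub G ↑S).deleteEdges ↑F).IsAcyclic →
      ε * S.card * d < (F.card : ℝ))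
    (hblue : ({v | v ∈ S ∧ CF.Blue μ α v}.ncard : ℝ) < ε * S.card / 2) :
    ε * S.card * α ^ 2 / (64 * (ℓ + 1)) ≤
      ((μ.prod μ) {p | ∃ w ∈ S, CF.EventE μ S w p}).toReal := by
  classical
  let T := S.filter fun w => (α / 4) ^ 2 ≤ (μ.prod μ).real {p | CF.EventE μ S w p}
  have hT : ε * S.card / 2 ≤ T.card := CF.card_filter_sq_le_eventE_ge μ hα hspec hdeg hfar
    (by rwa [← Set.ncard_coe_finset, Finset.coe_filter])
  have hsum : T.card * (α / 4) ^ 2 ≤ ∑ w ∈ T, (μ.prod μ).real {p | CF.EventE μ S w p} := by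
    simpa using Finset.card_nsmul_le_sum T _ _ fun w hw => (Finset.mem_filter.mp hw).2
  calc ε * S.card * α ^ 2 / (64 * (ℓ + 1)) = ε * S.card / 2 * (α / 4) ^ 2 / (2 * (ℓ + 1)) := by
        field_simp; ring
    _ ≤ (μ.prod μ).real {p | ∃ w ∈ T, CF.EventE μ S w p} := by
        rw [div_le_iff₀ (by positivity)]
        nlinarith [CF.sum_eventE_le μ (S := S) T]
    _ ≤ (μ.prod μ).real {p | ∃ w ∈ S, CF.EventE μ S w p} :=
        measureReal_mono fun p ⟨w, hw, hE⟩ => ⟨w, Finset.filter_subset _ S hw, hE⟩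

/-- If `G_S` is `ε`-far from cycle-free and fewer than `ε|S|/2` vertices of `S`
are blue, then `Pr(E) ≥ ε|S|α²/(64(ℓ+1))`, where `E = ⋃_{w ∈ S} E_w`. -/
theorem stmt8 {V : Type} [Fintype V] [DecidableEq V]
    (G : SimpleGraph V) [DecidableRel G.Adj] (d : ℕ) (hd : 1 ≤ d)
    (hdeg : ∀ v, G.degree v ≤ d)
    (ε : ℝ) (hε0 : 0 < ε) (hε1 : ε < 1)
    (S : Finset V) (s : V) (hs : s ∈ S) (ℓ : ℕ)
    (μ : MeasureTheory.Measure (CF.WalkSpace G s ℓ)) [MeasureTheory.IsProbabilityMeasure μ]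
    (α : ℝ) (hα : 0 < α) (hspec : CF.Special μ S α)
    (hfar : ∀ F : Finset (Sym2 V), ↑F ⊆ (CF.inducedSub G ↑S).edgeSet →
      ((CF.inducedSub G ↑S).deleteEdges ↑F).IsAcyclic →
      ε * S.card * d < (F.card : ℝ))
    (hblue : ({v | v ∈ S ∧ CF.Blue μ α v}.ncard : ℝ) < ε * S.card / 2) :
    ε * S.card * α ^ 2 / (64 * (ℓ + 1)) ≤
      ((μ.prod μ) {p | ∃ w ∈ S, CF.EventE μ S w p}).toReal :=
  stmt8_general G d hdeg ε S s ℓ μ α hα hspec hfar hblue
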